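/- arXiv:2211.09362 — 2 statements merged into one kernel-verified Lean document; each statement's English description precedes it below -/
import Mathlib

section
/- Under the assumptions of the even-shift equivariance identity, the low-resolution approximation error of the ORKA objective is bounded by the highpass energy: |⟨A^{−1,[K]}, (S_{−2λ'}(D))ᵀ S_{−2λ'}(D)⟩ − ⟨A^{−1,[K]}, (S_{−λ'}(D^{low}))ᵀ S_{−λ'}(D^{low})⟩| ≤ ‖A^{−1,[K]}‖_F · ‖D^{high}‖_F². -/
open Matrix

/-- Cyclic shift of a vector by `m` entries: `(S_m v)_j = v_{j-m}`. -/
def shiftVec {M : ℕ} (m : ℤ) (v : ZMod M → ℝ) : ZMod M → ℝ :=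
  fun j => v (j - (m : ZMod M))

/-- Column-wise cyclic shift operator: shifts the `k`-th column by `lam k` entries. -/
def colShift {M N : ℕ} (lam : Fin N → ℤ) (A : Matrix (ZMod M) (Fin N) ℝ) :
    Matrix (ZMod M) (Fin N) ℝ :=
  fun j k => A (j - (lam k : ZMod M)) k

/-- Column-wise lowpass coefficients of `D` under the wavelet transform `W`. -/
def lowpass {M N : ℕ} [NeZero M] (W : Matrix (ZMod M ⊕ ZMod M) (ZMod (2 * M)) ℝ)
    (D : Matrix (ZMod (2 * M)) (Fin N) ℝ) : Matrix (ZMod M) (Fin N) ℝ :=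
  fun j k => W.mulVec (fun i => D i k) (Sum.inl j)

/-- Column-wise highpass coefficients of `D` under the wavelet transform `W`. -/
def highpass {M N : ℕ} [NeZero M] (W : Matrix (ZMod M ⊕ ZMod M) (ZMod (2 * M)) ℝ)
    (D : Matrix (ZMod (2 * M)) (Fin N) ℝ) : Matrix (ZMod M) (Fin N) ℝ :=
  fun j k => W.mulVec (fun i => D i k) (Sum.inr j)

/-!
Orthogonality of `W` together with even-shift equivariance splits the Gram matrix of the
`2λ'`-shifted `D` into the Gram matrices of the `λ'`-shifted lowpass and highpass parts, so the
error is the Frobenius pairing of `B` with `HᵀH`, `H` the shifted highpass part. Cauchy–Schwarz and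
submultiplicativity of the Frobenius norm bound this by `‖B‖_F ‖H‖_F²`, and cyclic shifts of the
columns preserve `‖H‖_F`.
-/

open scoped Matrix.Norms.Frobenius

namespace Matrix

variable {l m n R : Type*}

theorem frobenius_norm_eq_sqrt_sum_sq [Fintype m] [Fintype n] (A : Matrix m n ℝ) :
    ‖A‖ = √(∑ i, ∑ j, A i j ^ 2) := by
  simp only [frobenius_norm_def, Real.norm_eq_abs, Real.rpow_two, sq_abs, Real.sqrt_eq_rpow]

theorem abs_sum_sum_mul_le_frobenius_norm_mul [Fintype m] [Fintype n] (A B : Matrix m n ℝ) :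
    |∑ i, ∑ j, A i j * B i j| ≤ ‖A‖ * ‖B‖ := by
  rw [frobenius_norm_eq_sqrt_sum_sq, frobenius_norm_eq_sqrt_sum_sq,
    ← Real.sqrt_mul (by positivity)]
  simp only [← Fintype.sum_prod_type']
  exact Real.abs_le_sqrt (Finset.sum_mul_sq_le_sq_mul_sq _ _ _)

theorem transpose_mul_self_of_transpose_mul_eq_one [Fintype l] [Fintype m] [DecidableEq m]
    [CommSemiring R] {W : Matrix l m R}
    (hW : Wᵀ * W = 1) (A : Matrix m n R) : (W * A)ᵀ * (W * A) = Aᵀ * A := by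
  rw [transpose_mul, Matrix.mul_assoc, ← Matrix.mul_assoc Wᵀ, hW, Matrix.one_mul]

theorem fromRows_transpose_mul_self {m₁ m₂ : Type*} [Fintype m₁] [Fintype m₂] [CommSemiring R]
    (A₁ : Matrix m₁ n R) (A₂ : Matrix m₂ n R) :
    (fromRows A₁ A₂)ᵀ * fromRows A₁ A₂ = A₁ᵀ * A₁ + A₂ᵀ * A₂ := by
  rw [transpose_fromRows, fromCols_mul_fromRows]

end Matrix

section Wavelet

variable {M N : ℕ} [NeZero M]

theorem frobenius_norm_colShift (lam : Fin N → ℤ) (A : Matrix (ZMod M) (Fin N) ℝ) :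
    ‖colShift lam A‖ = ‖A‖ := by
  simp only [frobenius_norm_eq_sqrt_sum_sq, colShift]
  rw [Finset.sum_comm, Finset.sum_comm (f := fun i k => A i k ^ 2)]
  congr! 2 with k
  exact Equiv.sum_comp (Equiv.subRight _) (fun i => A i k ^ 2)

def EvenShiftEquivariant (W : Matrix (ZMod M ⊕ ZMod M) (ZMod (2 * M)) ℝ) : Prop :=
  ∀ (v : ZMod (2 * M) → ℝ) (lam : ℤ),
    W *ᵥ shiftVec (2 * lam) v =
      Sum.elim (shiftVec lam fun j => (W *ᵥ v) (Sum.inl j))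
        (shiftVec lam fun j => (W *ᵥ v) (Sum.inr j))

variable {W : Matrix (ZMod M ⊕ ZMod M) (ZMod (2 * M)) ℝ}

theorem mul_colShift_two_mul
    (hshift : EvenShiftEquivariant W)
    (D : Matrix (ZMod (2 * M)) (Fin N) ℝ) (lam : Fin N → ℤ) :
    W * colShift (fun k => -(2 * lam k)) D =
      fromRows (colShift (fun k => -lam k) (lowpass W D))
        (colShift (fun k => -lam k) (highpass W D)) := by
  ext i k
  have hcol : (fun j => colShift (fun k => -(2 * lam k)) D j k) =
      shiftVec (2 * -lam k) (fun j => D j k) := by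
    funext j
    simp only [colShift, shiftVec, mul_neg]
  have := congrFun (hshift (fun j => D j k) (-lam k)) i
  rw [← hcol] at this
  rcases i with i | i <;> exact this

theorem gram_colShift_two_mul (hW : Wᵀ * W = 1)
    (hshift : EvenShiftEquivariant W)
    (D : Matrix (ZMod (2 * M)) (Fin N) ℝ) (lam : Fin N → ℤ) :
    (colShift (fun k => -(2 * lam k)) D)ᵀ * colShift (fun k => -(2 * lam k)) D =
      (colShift (fun k => -lam k) (lowpass W D))ᵀ * colShift (fun k => -lam k) (lowpass W D) +
        (colShift (fun k => -lam k) (highpass W D))ᵀ *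
          colShift (fun k => -lam k) (highpass W D) := by
  rw [← transpose_mul_self_of_transpose_mul_eq_one hW, mul_colShift_two_mul hshift,
    fromRows_transpose_mul_self]

end Wavelet

/-- The low-resolution approximation error of the ORKA objective is bounded by
the highpass energy: `|⟨B, Gram(S_{−2λ'}D)⟩ − ⟨B, Gram(S_{−λ'}D^low)⟩| ≤ ‖B‖_F ‖D^high‖_F²`. -/
theorem lowres_error_bound {M N : ℕ} [NeZero M]
    (W : Matrix (ZMod M ⊕ ZMod M) (ZMod (2 * M)) ℝ)
    (hW : Wᵀ * W = 1)
    (hshift : ∀ (v : ZMod (2 * M) → ℝ) (lam : ℤ),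
      W.mulVec (shiftVec (2 * lam) v) =
        Sum.elim (shiftVec lam (fun j => W.mulVec v (Sum.inl j)))
                 (shiftVec lam (fun j => W.mulVec v (Sum.inr j))))
    (D : Matrix (ZMod (2 * M)) (Fin N) ℝ) (lam' : Fin N → ℤ)
    (B : Matrix (Fin N) (Fin N) ℝ) :
    |(∑ j, ∑ k, B j k *
        (((colShift (fun k => -(2 * lam' k)) D)ᵀ *
          colShift (fun k => -(2 * lam' k)) D) j k)) -
      (∑ j, ∑ k, B j k *
        (((colShift (fun k => -lam' k) (lowpass W D))ᵀ *
          colShift (fun k => -lam' k) (lowpass W D)) j k))| ≤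
      Real.sqrt (∑ j, ∑ k, (B j k) ^ 2) *
        (∑ j, ∑ k, (highpass W D j k) ^ 2) := by
  set H := colShift (fun k => -lam' k) (highpass W D)
  rw [gram_colShift_two_mul hW hshift]
  simp only [Matrix.add_apply, mul_add, Finset.sum_add_distrib, add_sub_cancel_left]
  have hH : ‖H‖ ^ 2 = ∑ j, ∑ k, highpass W D j k ^ 2 := by
    rw [frobenius_norm_colShift, frobenius_norm_eq_sqrt_sum_sq, Real.sq_sqrt (by positivity)]
  calc |∑ j, ∑ k, B j k * (Hᵀ * H) j k|
      ≤ ‖B‖ * ‖Hᵀ * H‖ := abs_sum_sum_mul_le_frobenius_norm_mul B _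
    _ ≤ ‖B‖ * (‖Hᵀ‖ * ‖H‖) := by gcongr; exact frobenius_norm_mul _ _
    _ = _ := by rw [frobenius_norm_transpose, ← sq, hH, frobenius_norm_eq_sqrt_sum_sq]
end

section
/- Let D ∈ ℝ^{M×N}, λ ∈ ℤ^N, λ' ∈ ℤ^N with λ = 2λ' + λ'' for some λ'' ∈ {−1,0,1}^N, and let B ∈ ℝ^{N×N}. Then |⟨B, (S_{−λ}(D))ᵀ S_{−λ}(D) − (S_{−2λ'}(D))ᵀ S_{−2λ'}(D)⟩| ≤ Σ_{j,k=1}^N |B_{jk}| ‖D_{:,j}‖₂ ‖D_{:,k} − S_{λ''_k − λ''_j}(D_{:,k})‖₂, where S_m applied to a vector denotes cyclic shift by m entries. -/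
open Matrix

/-- Euclidean norm of a vector indexed by `ZMod M`. -/
noncomputable def vecNorm {M : ℕ} [NeZero M] (v : ZMod M → ℝ) : ℝ :=
  Real.sqrt (∑ j, (v j) ^ 2)

/-! A common cyclic shift of two columns preserves their inner product, so the `(j, k)` entry of
`Gram(S_{−λ}D) − Gram(S_{−2λ'}D)` is `⟨D_{:,j}, S_a D_{:,k} − S_b D_{:,k}⟩` with
`a = λ_j − λ_k` and `b = 2λ'_j − 2λ'_k`. Now `S_a − S_b = S_a (1 − S_{b−a})` with `S_a` an isometry
and `b − a = λ''_k − λ''_j`, so Cauchy–Schwarz bounds the entry by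
`‖D_{:,j}‖ ‖D_{:,k} − S_{λ''_k − λ''_j} D_{:,k}‖`; the triangle inequality over `j, k` finishes. -/

section Shift

variable {M : ℕ}

lemma shiftVec_sub_shiftVec (a b : ℤ) (v : ZMod M → ℝ) :
    shiftVec a v - shiftVec b v = shiftVec a (v - shiftVec (b - a) v) := by
  funext i
  simp only [shiftVec, Pi.sub_apply, Int.cast_sub, sub_sub_sub_cancel_right]

variable [NeZero M]

lemma vecNorm_shiftVec (a : ℤ) (v : ZMod M → ℝ) : vecNorm (shiftVec a v) = vecNorm v :=
  congrArg Real.sqrt (Equiv.sum_comp (Equiv.subRight (a : ZMod M)) (fun i => v i ^ 2))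

lemma abs_sum_mul_le_vecNorm_mul_vecNorm (v w : ZMod M → ℝ) :
    |∑ i, v i * w i| ≤ vecNorm v * vecNorm w := by
  rw [vecNorm, vecNorm, ← Real.sqrt_mul (by positivity), ← Real.sqrt_sq_eq_abs]
  exact Real.sqrt_le_sqrt (Finset.sum_mul_sq_le_sq_mul_sq _ v w)

lemma abs_sum_mul_shiftVec_sub_le (v w : ZMod M → ℝ) (a b : ℤ) :
    |∑ i, v i * (shiftVec a w i - shiftVec b w i)| ≤
      vecNorm v * vecNorm (fun i => w i - shiftVec (b - a) w i) := by
  calc |∑ i, v i * (shiftVec a w i - shiftVec b w i)|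
      _ ≤ vecNorm v * vecNorm (shiftVec a w - shiftVec b w) :=
        abs_sum_mul_le_vecNorm_mul_vecNorm v _
      _ = _ := by rw [shiftVec_sub_shiftVec, vecNorm_shiftVec]; rfl

lemma colShift_transpose_mul_self_apply {N : ℕ} (lam : Fin N → ℤ)
    (A : Matrix (ZMod M) (Fin N) ℝ) (j k : Fin N) :
    ((colShift lam A)ᵀ * colShift lam A) j k =
      ∑ i, A i j * shiftVec (lam k - lam j) (fun i => A i k) i := by
  rw [mul_apply, ← Equiv.sum_comp (Equiv.addRight (lam j : ZMod M))]
  refine Finset.sum_congr rfl fun i _ => ?_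
  simp only [transpose_apply, colShift, shiftVec, Equiv.coe_addRight, add_sub_cancel_right,
    Int.cast_sub]
  ring_nf

lemma abs_gram_colShift_sub_gram_colShift_apply_le {N : ℕ} (A : Matrix (ZMod M) (Fin N) ℝ)
    (μ ν : Fin N → ℤ) (j k : Fin N) :
    |((colShift μ A)ᵀ * colShift μ A) j k - ((colShift ν A)ᵀ * colShift ν A) j k| ≤
      vecNorm (fun i => A i j) *
        vecNorm (fun i => A i k - shiftVec ((ν k - ν j) - (μ k - μ j)) (fun i => A i k) i) := by
  rw [colShift_transpose_mul_self_apply, colShift_transpose_mul_self_apply,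
    ← Finset.sum_sub_distrib]
  simp only [← mul_sub]
  exact abs_sum_mul_shiftVec_sub_le _ _ _ _

end Shift

theorem refinement_error_bound_general {M N : ℕ} [NeZero M]
    (D : Matrix (ZMod M) (Fin N) ℝ) (lam lam' lam'' : Fin N → ℤ)
    (hdecomp : lam = fun k => 2 * lam' k + lam'' k)
    (B : Matrix (Fin N) (Fin N) ℝ) :
    |∑ j, ∑ k, B j k *
        ((((colShift (fun k => -lam k) D)ᵀ * colShift (fun k => -lam k) D) j k) -
         (((colShift (fun k => -(2 * lam' k)) D)ᵀ *
            colShift (fun k => -(2 * lam' k)) D) j k))| ≤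
      ∑ j, ∑ k, |B j k| * vecNorm (fun i => D i j) *
        vecNorm (fun i => D i k - shiftVec (lam'' k - lam'' j) (fun i' => D i' k) i) := by
  refine (Finset.abs_sum_le_sum_abs _ _).trans (Finset.sum_le_sum fun j _ =>
    (Finset.abs_sum_le_sum_abs _ _).trans (Finset.sum_le_sum fun k _ => ?_))
  have hshift : (-(2 * lam' k) - -(2 * lam' j)) - (-lam k - -lam j) = lam'' k - lam'' j := by
    subst hdecomp; ring
  rw [abs_mul, mul_assoc]
  gcongr
  simpa only [hshift] using abs_gram_colShift_sub_gram_colShift_apply_le D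
    (fun k => -lam k) (fun k => -(2 * lam' k)) j k

/-- Bound on the change of the ORKA objective under refinement of the shift vector:
if `λ = 2λ' + λ''` with `λ'' ∈ {−1,0,1}^N`, then
`|⟨B, Gram(S_{−λ}D) − Gram(S_{−2λ'}D)⟩|
  ≤ Σ_{j,k} |B_{jk}| ‖D_{:,j}‖₂ ‖D_{:,k} − S_{λ''_k − λ''_j}(D_{:,k})‖₂`. -/
theorem refinement_error_bound {M N : ℕ} [NeZero M]
    (D : Matrix (ZMod M) (Fin N) ℝ) (lam lam' lam'' : Fin N → ℤ)
    (hdecomp : lam = fun k => 2 * lam' k + lam'' k)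
    (hlam'' : ∀ k, lam'' k = -1 ∨ lam'' k = 0 ∨ lam'' k = 1)
    (B : Matrix (Fin N) (Fin N) ℝ) :
    |∑ j, ∑ k, B j k *
        ((((colShift (fun k => -lam k) D)ᵀ * colShift (fun k => -lam k) D) j k) -
         (((colShift (fun k => -(2 * lam' k)) D)ᵀ *
            colShift (fun k => -(2 * lam' k)) D) j k))| ≤
      ∑ j, ∑ k, |B j k| * vecNorm (fun i => D i j) *
        vecNorm (fun i => D i k - shiftVec (lam'' k - lam'' j) (fun i' => D i' k) i) :=
  refinement_error_bound_general D lam lam' lam'' hdecomp B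
end
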